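/- arXiv:math/0609623 — 4 statements merged into one kernel-verified Lean document; each statement's English description precedes it below -/
import Mathlib

section
/- Let (X,d) be a pseudometric space, A > 0, and let ξ : X × [0,∞) → [0,∞) satisfy: (1) for every x ∈ X and 0 ≤ r' ≤ r'', ξ(x,r') ≤ ξ(x,r''); (2) for every countable family {(x_i, r_i)} such that the closed balls B̄_{r_i}(x_i) are pairwise disjoint, Σ_i ξ(x_i, r_i) ≤ A. Let φ : [0,∞) → [0,∞) be continuous, strictly increasing, with φ(0) = 0 and lim_{t→∞} φ(t) > A. Call a point x ∈ X regular if ξ(x,t) < φ(t) for all t > 0. Then for every γ ∈ (0, 1/2) there is a (finite or countable) sequence of closed balls B̄_{t_k}(x_k) such that every point of X that is not regular lies in some B̄_{t_k}(x_k), and Σ_k φ(γ·t_k) ≤ A. -/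
open Metric

/-- Gorin's generalization of the Cartan lemma: covering of irregular points. -/
theorem stmt7 {X : Type*} [PseudoMetricSpace X] (A : ℝ) (hA : 0 < A)
    (ξ : X → ℝ → ℝ)
    (hξ0 : ∀ (x : X) (r : ℝ), 0 ≤ r → 0 ≤ ξ x r)
    (hξmono : ∀ (x : X) (r r' : ℝ), 0 ≤ r → r ≤ r' → ξ x r ≤ ξ x r')
    (hξsum : ∀ F : Finset (X × ℝ), (∀ pr ∈ F, 0 ≤ pr.2) →
      ((F : Set (X × ℝ)).Pairwise fun pr qr =>
        Disjoint (closedBall pr.1 pr.2) (closedBall qr.1 qr.2)) →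
      ∑ pr ∈ F, ξ pr.1 pr.2 ≤ A)
    (φ : ℝ → ℝ) (hφcont : ContinuousOn φ (Set.Ici 0))
    (hφmono : StrictMonoOn φ (Set.Ici 0)) (hφ0 : φ 0 = 0)
    (hφlim : ∃ t : ℝ, 0 ≤ t ∧ A < φ t)
    (γ : ℝ) (hγ0 : 0 < γ) (hγ : γ < 1 / 2) :
    ∃ D : Set (X × ℝ), D.Countable ∧ (∀ pr ∈ D, 0 ≤ pr.2) ∧
      (∀ y : X, ¬(∀ t : ℝ, 0 < t → ξ y t < φ t) → ∃ pr ∈ D, y ∈ closedBall pr.1 pr.2) ∧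
      ∀ F : Finset (X × ℝ), ↑F ⊆ D → ∑ pr ∈ F, φ (γ * pr.2) ≤ A := by
  classical
  obtain ⟨t₀, ht₀0, ht₀⟩ := hφlim
  -- ξ is bounded by A
  have hξA : ∀ (y : X) (t : ℝ), 0 ≤ t → ξ y t ≤ A := by
    intro y t ht
    have := hξsum {(y, t)} (by simp [ht]) (by simp [Set.Pairwise])
    simpa using this
  set I : Set X := {y | ¬ ∀ t : ℝ, 0 < t → ξ y t < φ t} with hI
  set S : X → Set ℝ := fun y => {t | 0 < t ∧ φ t ≤ ξ y t} with hSdef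
  set r : X → ℝ := fun y => sSup (S y) with hrdef
  have hSne : ∀ y ∈ I, (S y).Nonempty := by
    intro y hy
    rw [hI, Set.mem_setOf_eq] at hy
    push_neg at hy
    obtain ⟨t, ht, hle⟩ := hy
    exact ⟨t, ht, hle⟩
  have hSsub : ∀ y, S y ⊆ Set.Ioc 0 t₀ := by
    intro y t ht
    refine ⟨ht.1, ?_⟩
    by_contra h
    push_neg at h
    have h1 : φ t₀ ≤ φ t := hφmono.monotoneOn ht₀0 (le_of_lt (lt_of_le_of_lt ht₀0 h)) (le_of_lt h)
    have h2 : ξ y t ≤ A := hξA y t (le_of_lt ht.1)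
    linarith [ht.2]
  have hSbdd : ∀ y, BddAbove (S y) := fun y =>
    ⟨t₀, fun t ht => (hSsub y ht).2⟩
  -- properties of r on I
  have hrpos : ∀ y ∈ I, 0 < r y := by
    intro y hy
    obtain ⟨t, ht⟩ := hSne y hy
    exact lt_of_lt_of_le ht.1 (le_csSup (hSbdd y) ht)
  have hrle : ∀ y ∈ I, r y ≤ t₀ := by
    intro y hy
    exact csSup_le (hSne y hy) (fun t ht => (hSsub y ht).2)
  have hrkey : ∀ y ∈ I, φ (r y) ≤ ξ y (r y) := by
    intro y hy
    obtain ⟨v, hvmono, hvtend, hvmem⟩ := exists_seq_tendsto_sSup (hSne y hy) (hSbdd y)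
    have hry0 : (0:ℝ) ≤ r y := le_of_lt (hrpos y hy)
    have htend2 : Filter.Tendsto (fun n => φ (v n)) Filter.atTop (nhds (φ (r y))) := by
      refine ((hφcont (r y) hry0).tendsto).comp ?_
      rw [tendsto_nhdsWithin_iff]
      exact ⟨hvtend, Filter.Eventually.of_forall fun n => le_of_lt (hvmem n).1⟩
    refine le_of_tendsto htend2 (Filter.Eventually.of_forall fun n => ?_)
    have hle : v n ≤ r y := le_csSup (hSbdd y) (hvmem n)
    exact le_trans (hvmem n).2 (hξmono y (v n) (r y) (le_of_lt (hvmem n).1) hle)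
  -- the dilation parameter
  set τ : ℝ := 1 / (2 * γ) with hτdef
  have hτ1 : 1 < τ := by
    rw [hτdef]
    rw [lt_div_iff₀ (by linarith)]
    linarith
  have hτpos : 0 < τ := lt_trans one_pos hτ1
  have hkey : γ * (1 + τ) ≤ 1 := by
    have : γ * τ = 1 / 2 := by
      rw [hτdef]
      field_simp
    nlinarith
  -- Vitali covering
  obtain ⟨u, huI, hdisj, hcov⟩ := Vitali.exists_disjoint_subfamily_covering_enlargement
    (fun y => closedBall y (r y)) I r τ hτ1
    (fun y hy => le_of_lt (hrpos y hy)) t₀ hrle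
    (fun y hy => (nonempty_closedBall.2 (le_of_lt (hrpos y hy))))
  -- finite sums of φ (r b) over u are bounded by A
  have hsumu : ∀ G : Finset X, ↑G ⊆ u → ∑ b ∈ G, φ (r b) ≤ A := by
    intro G hG
    have step1 : ∑ b ∈ G, φ (r b) ≤ ∑ b ∈ G, ξ b (r b) := by
      refine Finset.sum_le_sum fun b hb => hrkey b (huI (hG hb))
    refine le_trans step1 ?_
    have heq : ∑ b ∈ G, ξ b (r b) = ∑ pr ∈ G.image (fun b => (b, r b)), ξ pr.1 pr.2 := by
      rw [Finset.sum_image]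
      intro b _ b' _ h
      exact (Prod.mk.injEq _ _ _ _ ▸ h).1
    rw [heq]
    refine hξsum _ ?_ ?_
    · intro pr hpr
      simp only [Finset.mem_image] at hpr
      obtain ⟨b, hb, rfl⟩ := hpr
      exact le_of_lt (hrpos b (huI (hG hb)))
    · intro pr hpr qr hqr hne
      simp only [Finset.coe_image, Set.mem_image, Finset.mem_coe] at hpr hqr
      obtain ⟨b, hb, rfl⟩ := hpr
      obtain ⟨b', hb', rfl⟩ := hqr
      have hbb' : b ≠ b' := fun h => hne (by rw [h])
      exact hdisj (hG hb) (hG hb') hbb'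
  -- u is countable
  have hucount : u.Countable := by
    set f : X → ℝ := fun b => if b ∈ u then φ (r b) else 0 with hfdef
    have hfpos : ∀ b ∈ u, 0 < f b := by
      intro b hb
      have h0 : φ 0 < φ (r b) :=
        hφmono (Set.mem_Ici.2 le_rfl) (Set.mem_Ici.2 (le_of_lt (hrpos b (huI hb)))) (hrpos b (huI hb))
      simp only [hfdef, if_pos hb]
      linarith [h0, hφ0]
    have hfnonneg : (0 : X → ℝ) ≤ f := by
      intro b
      by_cases hb : b ∈ u
      · exact le_of_lt (hfpos b hb)
      · simp [hfdef, hb]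
    have hfsum : ∀ F : Finset X, ∑ b ∈ F, f b ≤ A := by
      intro F
      have : ∑ b ∈ F, f b = ∑ b ∈ F.filter (· ∈ u), φ (r b) := by
        rw [Finset.sum_filter]
      rw [this]
      refine hsumu _ ?_
      intro b hb
      simp only [Finset.coe_filter, Set.mem_setOf_eq] at hb
      exact hb.2
    have hsm : Summable f := summable_of_sum_le hfnonneg hfsum
    refine Set.Countable.mono ?_ hsm.countable_support
    intro b hb
    exact Function.mem_support.2 (ne_of_gt (hfpos b hb))
  -- the covering family
  refine ⟨(fun b => (b, (1 + τ) * r b)) '' u, hucount.image _, ?_, ?_, ?_⟩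
  · intro pr hpr
    obtain ⟨b, hb, rfl⟩ := hpr
    have := hrpos b (huI hb)
    positivity
  · intro y hy
    have hyI : y ∈ I := hy
    obtain ⟨b, hb, ⟨z, hz1, hz2⟩, hrτ⟩ := hcov y hyI
    refine ⟨(b, (1 + τ) * r b), ⟨b, hb, rfl⟩, ?_⟩
    simp only [mem_closedBall] at *
    calc dist y b ≤ dist y z + dist z b := dist_triangle y z b
      _ = dist z y + dist z b := by rw [dist_comm y z]
      _ ≤ r y + r b := add_le_add hz1 hz2
      _ ≤ τ * r b + r b := by linarith
      _ = (1 + τ) * r b := by ring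
  · intro F hF
    -- each pair in F has the form (b, (1+τ) r b) with b ∈ u
    have hform : ∀ pr ∈ F, pr.1 ∈ u ∧ pr.2 = (1 + τ) * r pr.1 := by
      intro pr hpr
      obtain ⟨b, hb, rfl⟩ := hF hpr
      exact ⟨hb, rfl⟩
    have step1 : ∑ pr ∈ F, φ (γ * pr.2) ≤ ∑ pr ∈ F, φ (r pr.1) := by
      refine Finset.sum_le_sum fun pr hpr => ?_
      obtain ⟨hbu, h2⟩ := hform pr hpr
      have hrb : 0 < r pr.1 := hrpos pr.1 (huI hbu)
      have harg : γ * pr.2 = γ * (1 + τ) * r pr.1 := by rw [h2]; ring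
      have hnn : 0 ≤ γ * (1 + τ) * r pr.1 := by positivity
      have hle : γ * (1 + τ) * r pr.1 ≤ r pr.1 := by nlinarith
      rw [harg]
      exact hφmono.monotoneOn hnn (le_of_lt hrb) hle
    refine le_trans step1 ?_
    have heq : ∑ b ∈ F.image Prod.fst, φ (r b) = ∑ pr ∈ F, φ (r pr.1) := by
      refine Finset.sum_image ?_
      intro pr hpr qr hqr h
      have h1 := (hform pr hpr).2
      have h2 := (hform qr hqr).2
      exact Prod.ext h (by rw [h1, h2, h])
    rw [← heq]
    refine hsumu _ fun b hb => ?_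
    simp only [Finset.coe_image, Set.mem_image, Finset.mem_coe] at hb
    obtain ⟨pr, hpr, rfl⟩ := hb
    exact (hform pr hpr).1
end

section
/- Let (X,d) be a pseudometric space and μ a finite Borel measure on X with total mass μ(X) = κ, such that for every x ∈ X, ∫_X ln⁺ d(x,ξ) dμ(ξ) < ∞ (where ln⁺ t := max(0, ln t)). Fix γ ∈ (0, 1/2). Then for every H > 0 and s > 0 there is a (finite or countable) family of closed balls B̄_{r_j}(x_j) with Σ_j r_j^s < (H/γ)^s / s such that for every x ∈ X lying outside the union of these balls, the function ξ ↦ ln d(x,ξ) is μ-integrable and ∫_X ln d(x,ξ) dμ(ξ) ≥ κ·ln(H/e). -/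
open Metric MeasureTheory

private lemma stmt8_aux {X : Type*} [PseudoMetricSpace X] [MeasurableSpace X] [BorelSpace X]
    (μ : Measure X) [IsFiniteMeasure μ] (x : X) (H s a : ℝ)
    (hH : 0 < H) (hs : 0 < s) (ha0 : 0 < a) (ha1 : a ≤ 1)
    (hlogx : Integrable (fun ξ => max 0 (Real.log (dist x ξ))) μ)
    (good : ∀ t : ℝ, 0 < t → t ≤ H →
      μ (closedBall x t) ≤ ENNReal.ofReal ((μ Set.univ).toReal * s * a / H ^ s * t ^ s)) :
    Integrable (fun ξ => Real.log (dist x ξ)) μ ∧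
      (μ Set.univ).toReal * Real.log (H / Real.exp 1) ≤
        ∫ ξ, Real.log (dist x ξ) ∂μ := by
  set κ : ℝ := (μ Set.univ).toReal with hκ
  have hκ0 : 0 ≤ κ := ENNReal.toReal_nonneg
  have hHs : (0:ℝ) < H ^ s := Real.rpow_pos_of_pos hH s
  set g : X → ℝ := fun ξ => max 0 (Real.log H - Real.log (dist x ξ)) with hg
  have hdm : Measurable fun ξ : X => dist x ξ :=
    (Continuous.dist continuous_const continuous_id).measurable
  have hgm : Measurable g :=
    measurable_const.max (measurable_const.sub (Real.measurable_log.comp hdm))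
  have hg0 : ∀ ξ, 0 ≤ g ξ := fun ξ => le_max_left _ _
  -- layer cake bound on the lintegral of g
  have hgl : ∫⁻ ξ, ENNReal.ofReal (g ξ) ∂μ ≤ ENNReal.ofReal (κ * a) := by
    rw [lintegral_eq_lintegral_meas_lt μ (Filter.Eventually.of_forall hg0) hgm.aemeasurable]
    have hbound : ∀ t : ℝ, 0 < t →
        μ {ξ : X | t < g ξ} ≤ ENNReal.ofReal (κ * s * a * Real.exp (-(s * t))) := by
      intro t ht
      have hsub : {ξ : X | t < g ξ} ⊆ closedBall x (H * Real.exp (-t)) := by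
        intro ξ hξ
        simp only [Set.mem_setOf_eq, hg] at hξ
        have h1 : t < Real.log H - Real.log (dist x ξ) := by
          rcases max_cases 0 (Real.log H - Real.log (dist x ξ)) with ⟨h, _⟩ | ⟨h, _⟩ <;> linarith
        rcases eq_or_lt_of_le (dist_nonneg : 0 ≤ dist x ξ) with hd | hd
        · simp only [mem_closedBall, dist_comm]
          rw [← hd]
          positivity
        · have h2 : Real.log (dist x ξ) < Real.log H - t := by linarith
          have h3 : dist x ξ < Real.exp (Real.log H - t) := by
            calc dist x ξ = Real.exp (Real.log (dist x ξ)) := (Real.exp_log hd).symm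
            _ < _ := Real.exp_lt_exp.mpr h2
          rw [Real.exp_sub, Real.exp_log hH] at h3
          have h4 : H / Real.exp t = H * Real.exp (-t) := by
            rw [Real.exp_neg]; ring
          simp only [mem_closedBall, dist_comm]
          rw [← h4]
          exact h3.le
      have ht1 : H * Real.exp (-t) ≤ H := by
        nlinarith [Real.exp_le_one_iff.mpr (by linarith : -t ≤ 0), Real.exp_pos (-t)]
      have ht0 : 0 < H * Real.exp (-t) := by positivity
      calc μ {ξ : X | t < g ξ} ≤ μ (closedBall x (H * Real.exp (-t))) := measure_mono hsub
        _ ≤ ENNReal.ofReal (κ * s * a / H ^ s * (H * Real.exp (-t)) ^ s) := good _ ht0 ht1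
        _ = ENNReal.ofReal (κ * s * a * Real.exp (-(s * t))) := by
            congr 1
            rw [Real.mul_rpow hH.le (Real.exp_pos _).le,
              Real.rpow_def_of_pos (Real.exp_pos _), Real.log_exp]
            rw [show -t * s = -(s * t) by ring]
            field_simp
    calc ∫⁻ t in Set.Ioi (0:ℝ), μ {ξ : X | t < g ξ}
        ≤ ∫⁻ t in Set.Ioi (0:ℝ), ENNReal.ofReal (κ * s * a * Real.exp (-(s * t))) := by
          apply lintegral_mono_ae
          filter_upwards [self_mem_ae_restrict measurableSet_Ioi] with t ht
          exact hbound t ht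
      _ = ENNReal.ofReal (∫ t in Set.Ioi (0:ℝ), κ * s * a * Real.exp (-(s * t))) := by
          rw [ofReal_integral_eq_lintegral_ofReal]
          · have : IntegrableOn (fun t : ℝ => Real.exp (-s * t)) (Set.Ioi (0:ℝ)) :=
              exp_neg_integrableOn_Ioi 0 hs
            simp only [neg_mul] at this
            exact this.const_mul _
          · filter_upwards with t
            positivity
      _ ≤ ENNReal.ofReal (κ * a) := by
          apply ENNReal.ofReal_le_ofReal
          rw [MeasureTheory.integral_const_mul]
          have h1 : (∫ t in Set.Ioi (0:ℝ), Real.exp (-(s * t))) = s⁻¹ * Real.exp 0 := by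
            have := integral_comp_mul_left_Ioi (fun u => Real.exp (-u)) 0 hs
            simp only [mul_zero, smul_eq_mul] at this
            rw [show (fun t : ℝ => Real.exp (-(s * t))) = fun t : ℝ => Real.exp (-(s * t)) from rfl]
            rw [this, integral_exp_neg_Ioi, neg_zero]
          rw [h1, Real.exp_zero]
          have hsa : κ * s * a * (s⁻¹ * 1) = κ * a := by field_simp
          rw [hsa]
  -- g is integrable with small integral
  have hg_int : Integrable g μ := by
    refine ⟨hgm.aestronglyMeasurable, ?_⟩
    rw [hasFiniteIntegral_iff_ofReal (Filter.Eventually.of_forall hg0)]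
    exact lt_of_le_of_lt hgl ENNReal.ofReal_lt_top
  have hg_le : ∫ ξ, g ξ ∂μ ≤ κ := by
    have h1 : ∫ ξ, g ξ ∂μ = (∫⁻ ξ, ENNReal.ofReal (g ξ) ∂μ).toReal :=
      integral_eq_lintegral_of_nonneg_ae (Filter.Eventually.of_forall hg0)
        hgm.aestronglyMeasurable
    rw [h1]
    calc (∫⁻ ξ, ENNReal.ofReal (g ξ) ∂μ).toReal
        ≤ (ENNReal.ofReal (κ * a)).toReal := ENNReal.toReal_mono ENNReal.ofReal_ne_top hgl
      _ = κ * a := ENNReal.toReal_ofReal (by positivity)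
      _ ≤ κ := by nlinarith
  -- integrability of log dist
  have hfm : Measurable fun ξ : X => Real.log (dist x ξ) := Real.measurable_log.comp hdm
  have hf_int : Integrable (fun ξ => Real.log (dist x ξ)) μ := by
    apply Integrable.mono' (hlogx.add (hg_int.add (integrable_const |Real.log H|)))
      hfm.aestronglyMeasurable
    filter_upwards with ξ
    have h1 : 0 ≤ max 0 (Real.log (dist x ξ)) := le_max_left _ _
    have h2 : Real.log (dist x ξ) ≤ max 0 (Real.log (dist x ξ)) := le_max_right _ _
    have h3 : Real.log H - Real.log (dist x ξ) ≤ g ξ := le_max_right _ _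
    have h4 : 0 ≤ g ξ := hg0 ξ
    have h5 : -|Real.log H| ≤ Real.log H := neg_abs_le _
    have h6 : (0:ℝ) ≤ |Real.log H| := abs_nonneg _
    simp only [Pi.add_apply, Real.norm_eq_abs]
    rw [abs_le]
    constructor <;> nlinarith
  refine ⟨hf_int, ?_⟩
  -- final inequality
  have hfg : ∀ ξ, Real.log H - g ξ ≤ Real.log (dist x ξ) := by
    intro ξ
    have h3 : Real.log H - Real.log (dist x ξ) ≤ g ξ := le_max_right _ _
    linarith
  have hmono : ∫ ξ, (Real.log H - g ξ) ∂μ ≤ ∫ ξ, Real.log (dist x ξ) ∂μ :=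
    integral_mono ((integrable_const (Real.log H)).sub hg_int) hf_int hfg
  rw [integral_sub (integrable_const _) hg_int, integral_const, smul_eq_mul] at hmono
  have hlHe : Real.log (H / Real.exp 1) = Real.log H - 1 := by
    rw [Real.log_div hH.ne' (Real.exp_ne_zero 1), Real.log_exp]
  rw [hlHe]
  have hreal : μ.real Set.univ = κ := rfl
  rw [hreal] at hmono
  nlinarith

/-- Cartan type estimate for logarithmic potentials of a finite Borel measure on a
pseudometric space. -/
theorem stmt8 {X : Type*} [PseudoMetricSpace X] [MeasurableSpace X] [BorelSpace X]
    (μ : Measure X) [IsFiniteMeasure μ]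
    (hlog : ∀ x : X, Integrable (fun ξ => max 0 (Real.log (dist x ξ))) μ)
    (γ : ℝ) (hγ0 : 0 < γ) (hγ : γ < 1 / 2)
    (H s : ℝ) (hH : 0 < H) (hs : 0 < s) :
    ∃ D : Set (X × ℝ), D.Countable ∧ (∀ pr ∈ D, 0 ≤ pr.2) ∧
      Summable (fun pr : D => ((pr : X × ℝ).2) ^ s) ∧
      (∑' pr : D, ((pr : X × ℝ).2) ^ s) < (H / γ) ^ s / s ∧
      ∀ x : X, (∀ pr ∈ D, x ∉ closedBall pr.1 pr.2) →
        Integrable (fun ξ => Real.log (dist x ξ)) μ ∧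
        (μ Set.univ).toReal * Real.log (H / Real.exp 1) ≤
          ∫ ξ, Real.log (dist x ξ) ∂μ := by
  classical
  set κ : ℝ := (μ Set.univ).toReal with hκdef
  have hκtop : μ Set.univ ≠ ⊤ := measure_ne_top μ _
  have hκ0 : 0 ≤ κ := ENNReal.toReal_nonneg
  set τ : ℝ := 1 / (2 * γ) with hτdef
  have hτ : 1 < τ := by
    rw [hτdef, lt_div_iff₀ (by linarith)]
    linarith
  set β : ℝ := 1 + τ with hβdef
  have hβ0 : 0 < β := by linarith
  have hβγ : β * γ = γ + 1 / 2 := by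
    rw [hβdef, hτdef]
    field_simp
  have hβγ0 : 0 < β * γ := by rw [hβγ]; linarith
  have hβγ1 : β * γ < 1 := by rw [hβγ]; linarith
  set a : ℝ := (β * γ) ^ s with hadef
  have ha0 : 0 < a := Real.rpow_pos_of_pos hβγ0 s
  have ha1 : a < 1 := Real.rpow_lt_one hβγ0.le hβγ1 hs
  have hHs : (0:ℝ) < H ^ s := Real.rpow_pos_of_pos hH s
  set c : ℝ := κ * s * a / H ^ s with hcdef
  have hc0 : 0 ≤ c := by positivity
  set E : Set X :=
    {x | ∃ t : ℝ, 0 < t ∧ t ≤ H ∧ ENNReal.ofReal (c * t ^ s) < μ (closedBall x t)} with hEdef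
  set ρ : X → ℝ := fun x => if h : x ∈ E then h.choose else 0 with hρdef
  have hρ : ∀ x ∈ E, 0 < ρ x ∧ ρ x ≤ H ∧
      ENNReal.ofReal (c * ρ x ^ s) < μ (closedBall x (ρ x)) := by
    intro x hx
    simp only [hρdef, dif_pos hx]
    exact ⟨hx.choose_spec.1, hx.choose_spec.2.1, hx.choose_spec.2.2⟩
  obtain ⟨u, huE, hdisj, hcov⟩ :=
    Vitali.exists_disjoint_subfamily_covering_enlargement
      (fun x : X => closedBall x (ρ x)) E ρ τ hτ (fun x hx => (hρ x hx).1.le) H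
      (fun x hx => (hρ x hx).2.1)
      (fun x hx => ⟨x, mem_closedBall_self (hρ x hx).1.le⟩)
  have hupos : ∀ y : u, 0 < μ (closedBall (y : X) (ρ (y : X))) := fun y =>
    lt_of_le_of_lt zero_le (hρ _ (huE y.2)).2.2
  have hdisj' : Pairwise (Function.onFun Disjoint fun y : u => closedBall (y : X) (ρ (y : X))) := by
    intro i j hij
    exact hdisj i.2 j.2 (fun h => hij (Subtype.coe_injective h))
  have hu_count : u.Countable := by
    have h1 := MeasureTheory.Measure.countable_meas_pos_of_disjoint_of_meas_iUnion_ne_top μ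
      (As := fun y : u => closedBall (y : X) (ρ (y : X)))
      (fun y => measurableSet_closedBall) hdisj'
      (ne_top_of_le_ne_top hκtop (measure_mono (Set.subset_univ _)))
    have h2 : {y : u | 0 < μ (closedBall (y : X) (ρ (y : X)))} = Set.univ :=
      Set.eq_univ_of_forall fun y => hupos y
    rw [h2] at h1
    have : Countable u := Set.countable_univ_iff.mp h1
    exact Set.countable_coe_iff.mp this
  -- total measure bound for the disjoint family
  have htsum_le : ∑' y : u, μ (closedBall (y : X) (ρ (y : X))) ≤ μ Set.univ := by
    have := Set.Countable.to_subtype hu_count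
    calc ∑' y : u, μ (closedBall (y : X) (ρ (y : X)))
        ≤ μ (⋃ y : u, closedBall (y : X) (ρ (y : X))) :=
          tsum_meas_le_meas_iUnion_of_disjoint μ (fun y => measurableSet_closedBall) hdisj'
      _ ≤ μ Set.univ := measure_mono (Set.subset_univ _)
  -- the key summability facts on u
  have key : Summable (fun y : u => (β * ρ (y : X)) ^ s) ∧
      (∑' y : u, (β * ρ (y : X)) ^ s) < (H / γ) ^ s / s := by
    have hbound_pos : (0:ℝ) < (H / γ) ^ s / s :=
      div_pos (Real.rpow_pos_of_pos (div_pos hH hγ0) s) hs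
    rcases u.eq_empty_or_nonempty with hu | ⟨y₀, hy₀⟩
    · haveI : IsEmpty ↥u := Set.isEmpty_coe_sort.mpr hu
      exact ⟨summable_empty, by rw [tsum_empty]; exact hbound_pos⟩
    · -- nonempty case
      have hκpos : 0 < κ := by
        rw [hκdef]
        refine ENNReal.toReal_pos ?_ hκtop
        intro h0
        have := lt_of_lt_of_le (hupos ⟨y₀, hy₀⟩)
          (le_trans (measure_mono (Set.subset_univ _)) (le_of_eq h0))
        exact absurd this (lt_irrefl _)
      have hcpos : 0 < c := by positivity
      have hlt : ∑' y : u, ENNReal.ofReal (c * ρ (y : X) ^ s) < μ Set.univ := by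
        calc ∑' y : u, ENNReal.ofReal (c * ρ (y : X) ^ s)
            < ∑' y : u, μ (closedBall (y : X) (ρ (y : X))) := by
              apply ENNReal.tsum_lt_tsum (i := ⟨y₀, hy₀⟩)
              · exact ne_top_of_le_ne_top hκtop
                  (le_trans (ENNReal.tsum_le_tsum fun y => (hρ _ (huE y.2)).2.2.le) htsum_le)
              · exact fun y => (hρ _ (huE y.2)).2.2.le
              · exact (hρ _ (huE hy₀)).2.2
          _ ≤ μ Set.univ := htsum_le
      have hne_top : ∑' y : u, ENNReal.ofReal (c * ρ (y : X) ^ s) ≠ ⊤ :=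
        ne_top_of_le_ne_top hκtop hlt.le
      have hterm : ∀ y : u, 0 ≤ c * ρ (y : X) ^ s := fun y =>
        mul_nonneg hc0 (Real.rpow_nonneg (hρ _ (huE y.2)).1.le s)
      have hsum1 : Summable (fun y : u => c * ρ (y : X) ^ s) := by
        have h := ENNReal.summable_toReal hne_top
        convert h using 2 with y
        rw [ENNReal.toReal_ofReal (hterm y)]
      have hsum_lt : (∑' y : u, c * ρ (y : X) ^ s) < κ := by
        have h1 : ENNReal.ofReal (∑' y : u, c * ρ (y : X) ^ s)
            = ∑' y : u, ENNReal.ofReal (c * ρ (y : X) ^ s) :=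
          ENNReal.ofReal_tsum_of_nonneg (fun y => hterm y) hsum1
        have h2 : ENNReal.ofReal (∑' y : u, c * ρ (y : X) ^ s) < ENNReal.ofReal κ := by
          rw [h1, hκdef, ENNReal.ofReal_toReal hκtop]
          exact hlt
        exact (ENNReal.ofReal_lt_ofReal_iff_of_nonneg
          (tsum_nonneg fun y => hterm y)).mp h2
      -- transfer to (β * ρ)^s
      have heq : ∀ y : u, (β * ρ (y : X)) ^ s = (β ^ s * c⁻¹) * (c * ρ (y : X) ^ s) := by
        intro y
        have hρy : 0 ≤ ρ (y : X) := (hρ _ (huE y.2)).1.le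
        rw [Real.mul_rpow hβ0.le hρy]
        field_simp
      constructor
      · rw [show (fun y : u => (β * ρ (y : X)) ^ s)
            = fun y : u => (β ^ s * c⁻¹) * (c * ρ (y : X) ^ s) from funext heq]
        exact hsum1.mul_left _
      · rw [show (fun y : u => (β * ρ (y : X)) ^ s)
            = fun y : u => (β ^ s * c⁻¹) * (c * ρ (y : X) ^ s) from funext heq]
        rw [tsum_mul_left]
        have hβs : (0:ℝ) < β ^ s := Real.rpow_pos_of_pos hβ0 s
        calc β ^ s * c⁻¹ * ∑' y : u, (c * ρ (y : X) ^ s)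
            < β ^ s * c⁻¹ * κ := by
              apply mul_lt_mul_of_pos_left hsum_lt
              positivity
          _ = (H / γ) ^ s / s := by
              rw [hcdef, hadef]
              rw [Real.div_rpow hH.le hγ0.le, Real.mul_rpow hβ0.le hγ0.le]
              have hγs : (0:ℝ) < γ ^ s := Real.rpow_pos_of_pos hγ0 s
              field_simp
  obtain ⟨hsum_u, hlt_u⟩ := key
  -- build D
  set f : X → X × ℝ := fun y => (y, β * ρ y) with hfdef
  have hfinj : Set.InjOn f u := fun p _ q _ h => congrArg Prod.fst h
  refine ⟨f '' u, hu_count.image f, ?_, ?_, ?_, ?_⟩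
  · rintro pr ⟨y, hy, rfl⟩
    have := (hρ _ (huE hy)).1.le
    simp only [hfdef]
    positivity
  · -- summable
    exact (Equiv.summable_iff (Equiv.Set.imageOfInjOn f u hfinj)).mp hsum_u
  · -- tsum bound
    rw [← Equiv.tsum_eq (Equiv.Set.imageOfInjOn f u hfinj)
      (fun pr : ↥(f '' u) => ((pr : X × ℝ)).2 ^ s)]
    exact hlt_u
  · -- the main pointwise statement
    intro x hx
    apply stmt8_aux μ x H s a hH hs ha0 ha1.le (hlog x)
    intro t ht0 htH
    by_contra hcon
    push_neg at hcon
    rw [← hκdef, ← hcdef] at hcon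
    have hxE : x ∈ E := ⟨t, ht0, htH, hcon⟩
    obtain ⟨y, hyu, ⟨z, hz1, hz2⟩, hρτ⟩ := hcov x hxE
    have hρy : 0 < ρ y := (hρ _ (huE hyu)).1
    have hdxy : dist x y ≤ β * ρ y := by
      calc dist x y ≤ dist x z + dist z y := dist_triangle x z y
        _ ≤ ρ x + ρ y := by
            have h1 : dist z x ≤ ρ x := mem_closedBall.mp hz1
            have h2 : dist z y ≤ ρ y := mem_closedBall.mp hz2
            rw [dist_comm x z]
            linarith
        _ ≤ τ * ρ y + ρ y := by linarith
        _ = β * ρ y := by rw [hβdef]; ring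
    exact hx (f y) ⟨y, hyu, rfl⟩ (mem_closedBall.mpr hdxy)
end

section
/- Let k ≥ 1 be an integer and ω a quasipower k-majorant. Then for all integers i ≤ i', Σ_{j=i}^{i'} ω(2^j) ≤ (2^k·C_ω/ln 2)·ω(2^{i'}). -/
open MeasureTheory Set

/-- `ω` is a quasipower `k`-majorant with constant `Cω`:
`ω : (0,∞) → (0,∞)` is nondecreasing, `ω(0+) = 0`, `t ↦ ω(t)/t^k` is nonincreasing,
and `∫₀ᵗ ω(u)/u du ≤ Cω · ω(t)` for all `t > 0`. -/
def IsQuasipowerMajorant (k : ℕ) (ω : ℝ → ℝ) (Cω : ℝ) : Prop :=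
  (∀ t : ℝ, 0 < t → 0 < ω t) ∧ MonotoneOn ω (Ioi 0) ∧
    Filter.Tendsto ω (nhdsWithin 0 (Ioi 0)) (nhds 0) ∧
    AntitoneOn (fun t : ℝ => ω t / t ^ k) (Ioi 0) ∧
    ∀ t : ℝ, 0 < t → IntervalIntegrable (fun u => ω u / u) volume 0 t ∧
      (∫ u in (0:ℝ)..t, ω u / u) ≤ Cω * ω t

/-- Summation lemma for quasipower majorants over dyadic points. -/
theorem stmt12 (k : ℕ) (hk : 1 ≤ k) (ω : ℝ → ℝ) (Cω : ℝ)
    (hω : IsQuasipowerMajorant k ω Cω) (i i' : ℤ) (h : i ≤ i') :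
    ∑ j ∈ Finset.Icc i i', ω ((2 : ℝ) ^ j) ≤
      (2 ^ k * Cω / Real.log 2) * ω ((2 : ℝ) ^ i') := by
  obtain ⟨hpos, hmono, -, hanti, hint⟩ := hω
  have hlog : 0 < Real.log 2 := Real.log_pos one_lt_two
  have h2k : (0:ℝ) < 2 ^ k := by positivity
  have hz : ∀ j : ℤ, (0:ℝ) < 2 ^ j := fun j => zpow_pos (by norm_num) j
  -- integrability on subintervals of (0, t]
  have hsub : ∀ a b : ℤ, a ≤ b →
      IntervalIntegrable (fun u => ω u / u) volume ((2:ℝ) ^ a) ((2:ℝ) ^ b) := by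
    intro a b hab
    refine ((hint ((2:ℝ) ^ b) (hz b)).1).mono_set ?_
    apply Set.uIcc_subset_uIcc <;> rw [Set.mem_uIcc]
    · exact Or.inl ⟨(hz a).le, zpow_le_zpow_right₀ (by norm_num) hab⟩
    · exact Or.inl ⟨(hz b).le, le_rfl⟩
  -- key lower bound for one dyadic block
  have key : ∀ j : ℤ, Real.log 2 * (ω ((2:ℝ) ^ j) / 2 ^ k) ≤
      ∫ u in ((2:ℝ) ^ (j - 1))..((2:ℝ) ^ j), ω u / u := by
    intro j
    set a : ℝ := (2:ℝ) ^ (j - 1) with ha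
    set b : ℝ := (2:ℝ) ^ j with hb
    have ha0 : 0 < a := hz _
    have hb0 : 0 < b := hz _
    have hab : a ≤ b := zpow_le_zpow_right₀ (by norm_num) (by omega)
    have hba : b = 2 * a := by
      rw [ha, hb]
      rw [show j = (j - 1) + 1 by ring, zpow_add₀ (by norm_num : (2:ℝ) ≠ 0)]
      ring
    have hωb := hpos b hb0
    -- pointwise bound
    have hpt : ∀ u ∈ Set.Icc a b, (ω b / 2 ^ k) / u ≤ ω u / u := by
      intro u hu
      have hu0 : 0 < u := lt_of_lt_of_le ha0 hu.1
      have h1 : ω b / b ^ k ≤ ω u / u ^ k := hanti hu0 hb0 hu.2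
      have h2 : ω b * (u / b) ^ k ≤ ω u := by
        have hbk : (0:ℝ) < b ^ k := by positivity
        rw [div_le_div_iff₀ hbk (by positivity)] at h1
        rw [div_pow, ← mul_div_assoc, div_le_iff₀ hbk]
        linarith [h1]
      have h3 : ω b / 2 ^ k ≤ ω b * (u / b) ^ k := by
        have : (1 / 2 : ℝ) ^ k ≤ (u / b) ^ k := by
          apply pow_le_pow_left₀ (by norm_num)
          rw [div_le_div_iff₀ (by norm_num) hb0, hba]
          nlinarith [hu.1]
        calc ω b / 2 ^ k = ω b * (1 / 2) ^ k := by
              rw [div_pow, one_pow]; ring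
          _ ≤ ω b * (u / b) ^ k := by
              exact mul_le_mul_of_nonneg_left this hωb.le
      exact (div_le_div_iff_of_pos_right hu0).mpr (le_trans h3 h2)
    -- integral of c / u over [a, b]
    have hcint : IntervalIntegrable (fun u => (ω b / 2 ^ k) / u) volume a b := by
      apply ContinuousOn.intervalIntegrable
      apply ContinuousOn.div continuousOn_const continuousOn_id
      intro x hx
      rw [Set.uIcc_of_le hab] at hx
      exact (lt_of_lt_of_le ha0 hx.1).ne'
    have hcval : (∫ u in a..b, (ω b / 2 ^ k) / u) = Real.log 2 * (ω b / 2 ^ k) := by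
      have h0 : (0:ℝ) ∉ Set.uIcc a b := by
        rw [Set.uIcc_of_le hab]
        intro hx
        exact absurd hx.1 (not_le.mpr ha0)
      simp only [div_eq_mul_inv]
      rw [intervalIntegral.integral_const_mul, integral_inv h0, hba,
        mul_div_assoc, div_self ha0.ne', mul_one]
      ring
    calc Real.log 2 * (ω b / 2 ^ k) = ∫ u in a..b, (ω b / 2 ^ k) / u := hcval.symm
      _ ≤ ∫ u in a..b, ω u / u := by
          exact intervalIntegral.integral_mono_on hab hcint (hsub (j-1) j (by omega)) hpt
  -- main induction
  have main : ∀ n : ℤ, i ≤ n →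
      Real.log 2 / 2 ^ k * ∑ j ∈ Finset.Icc i n, ω ((2:ℝ) ^ j) ≤
        ∫ u in ((2:ℝ) ^ (i - 1))..((2:ℝ) ^ n), ω u / u := by
    refine Int.le_induction ?_ ?_
    · rw [Finset.Icc_self, Finset.sum_singleton]
      rw [div_mul_eq_mul_div, mul_div_assoc]
      exact key i
    · intro n hn ih
      have hins : Finset.Icc i (n + 1) = insert (n + 1) (Finset.Icc i n) := by
        ext x; simp only [Finset.mem_Icc, Finset.mem_insert]; omega
      rw [hins, Finset.sum_insert (by simp only [Finset.mem_Icc]; omega)]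
      have hadd : (∫ u in ((2:ℝ) ^ (i - 1))..((2:ℝ) ^ n), ω u / u) +
          (∫ u in ((2:ℝ) ^ n)..((2:ℝ) ^ (n + 1)), ω u / u) =
          ∫ u in ((2:ℝ) ^ (i - 1))..((2:ℝ) ^ (n + 1)), ω u / u :=
        intervalIntegral.integral_add_adjacent_intervals
          (hsub (i - 1) n (by omega)) (hsub n (n + 1) (by omega))
      have hkey := key (n + 1)
      rw [show (n + 1 - 1 : ℤ) = n by ring] at hkey
      calc Real.log 2 / 2 ^ k * (ω ((2:ℝ) ^ (n + 1)) + ∑ j ∈ Finset.Icc i n, ω ((2:ℝ) ^ j))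
          = Real.log 2 / 2 ^ k * ∑ j ∈ Finset.Icc i n, ω ((2:ℝ) ^ j) +
            Real.log 2 * (ω ((2:ℝ) ^ (n + 1)) / 2 ^ k) := by ring
        _ ≤ (∫ u in ((2:ℝ) ^ (i - 1))..((2:ℝ) ^ n), ω u / u) +
            (∫ u in ((2:ℝ) ^ n)..((2:ℝ) ^ (n + 1)), ω u / u) := add_le_add ih hkey
        _ = _ := hadd
  -- compare with integral from 0
  have hsplit : (∫ u in (0:ℝ)..((2:ℝ) ^ (i - 1)), ω u / u) +
      (∫ u in ((2:ℝ) ^ (i - 1))..((2:ℝ) ^ i'), ω u / u) =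
      ∫ u in (0:ℝ)..((2:ℝ) ^ i'), ω u / u := by
    apply intervalIntegral.integral_add_adjacent_intervals
      (hint _ (hz (i - 1))).1 (hsub (i - 1) i' (by omega))
  have hnn : 0 ≤ ∫ u in (0:ℝ)..((2:ℝ) ^ (i - 1)), ω u / u := by
    apply intervalIntegral.integral_nonneg (hz (i - 1)).le
    intro u hu
    rcases eq_or_lt_of_le hu.1 with h0 | h0
    · simp [← h0]
    · exact div_nonneg (hpos u h0).le h0.le
  have hchain : Real.log 2 / 2 ^ k * ∑ j ∈ Finset.Icc i i', ω ((2:ℝ) ^ j) ≤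
      Cω * ω ((2:ℝ) ^ i') := by
    calc Real.log 2 / 2 ^ k * ∑ j ∈ Finset.Icc i i', ω ((2:ℝ) ^ j)
        ≤ ∫ u in ((2:ℝ) ^ (i - 1))..((2:ℝ) ^ i'), ω u / u := main i' h
      _ ≤ ∫ u in (0:ℝ)..((2:ℝ) ^ i'), ω u / u := by linarith [hsplit, hnn]
      _ ≤ Cω * ω ((2:ℝ) ^ i') := (hint _ (hz i')).2
  calc ∑ j ∈ Finset.Icc i i', ω ((2:ℝ) ^ j)
      = (2 ^ k / Real.log 2) * (Real.log 2 / 2 ^ k * ∑ j ∈ Finset.Icc i i', ω ((2:ℝ) ^ j)) := by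
        field_simp
    _ ≤ (2 ^ k / Real.log 2) * (Cω * ω ((2:ℝ) ^ i')) := by
        exact mul_le_mul_of_nonneg_left hchain (by positivity)
    _ = (2 ^ k * Cω / Real.log 2) * ω ((2:ℝ) ^ i') := by ring
end

section
/- Let k ≥ 1, let ω be a quasipower k-majorant, and let X ⊆ ℝⁿ be a closed unbounded set. For each x ∈ X and r > 0 let P_{x,r} be a real polynomial in n variables of degree ≤ k−1, and let Q_r(x) denote the closed cube with center x and radius r (half the side length). Suppose there is a constant C ≥ 0 such that whenever x, x' ∈ X, 0 < r < r', Q_r(x) ⊆ Q_{r'}(x'), and there is an integer i with 2^i ≤ r < r' ≤ 2^{i+2}, one has sup_{y ∈ Q_r(x)} |P_{x,r}(y) − P_{x',r'}(y)| ≤ C·ω(r'). Then there is a constant c, depending only on k and C_ω, such that for every x, x' ∈ X and 0 < r < r' with Q_r(x) ⊆ Q_{r'}(x'), sup_{y ∈ Q_r(x)} |P_{x,r}(y) − P_{x',r'}(y)| ≤ c·C·ω(r'). -/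
set_option maxHeartbeats 1000000

open MeasureTheory Set MvPolynomial

/-- The closed cube with center `x` and radius `r` (half the side length). -/
def eCube {n : ℕ} (x : EuclideanSpace ℝ (Fin n)) (r : ℝ) : Set (EuclideanSpace ℝ (Fin n)) :=
  {y | ∀ i, |y i - x i| ≤ r}

section Aux

variable {n : ℕ}

lemma eCube_mono {x : EuclideanSpace ℝ (Fin n)} {r r' : ℝ} (h : r ≤ r') :
    eCube x r ⊆ eCube x r' := fun _ hy i => (hy i).trans h

lemma isCompact_eCube (x : EuclideanSpace ℝ (Fin n)) (r : ℝ) : IsCompact (eCube x r) := by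
  have h : eCube x r = WithLp.ofLp ⁻¹' Set.pi Set.univ (fun i => Icc (x i - r) (x i + r)) := by
    ext y
    constructor
    · intro h i _
      have := abs_le.mp (h i)
      exact ⟨by linarith [this.1], by linarith [this.2]⟩
    · intro h i
      have := h i (mem_univ i)
      rw [abs_le]
      exact ⟨by linarith [this.1], by linarith [this.2]⟩
  rw [h]
  exact (PiLp.continuousLinearEquiv 2 ℝ (fun _ : Fin n => ℝ)).toHomeomorph.isCompact_preimage.mpr
    (isCompact_univ_pi fun i => isCompact_Icc)

lemma bddAbove_cubeSup {f : EuclideanSpace ℝ (Fin n) → ℝ} (hf : Continuous f)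
    (x : EuclideanSpace ℝ (Fin n)) (r : ℝ) :
    BddAbove (range fun y => ⨆ _ : y ∈ eCube x r, f y) := by
  have h1 : BddAbove (f '' eCube x r) :=
    (isCompact_eCube x r).bddAbove_image hf.continuousOn
  refine (h1.insert 0).mono ?_
  rintro - ⟨y, rfl⟩
  show (⨆ _ : y ∈ eCube x r, f y) ∈ _
  by_cases hy : y ∈ eCube x r
  · rw [ciSup_pos hy]; exact Or.inr ⟨y, hy, rfl⟩
  · simp only [hy]
    rw [Real.iSup_of_isEmpty]
    exact Or.inl rfl

lemma cubeSup_le {f : EuclideanSpace ℝ (Fin n) → ℝ} {a : ℝ}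
    {x : EuclideanSpace ℝ (Fin n)} {r : ℝ}
    (h : ∀ y ∈ eCube x r, f y ≤ a) (ha : 0 ≤ a) :
    (⨆ y ∈ eCube x r, f y) ≤ a := by
  refine Real.iSup_le (fun y => ?_) ha
  by_cases hy : y ∈ eCube x r
  · rw [ciSup_pos hy]; exact h y hy
  · simp only [hy]; rw [Real.iSup_of_isEmpty]; exact ha

lemma le_cubeSup {f : EuclideanSpace ℝ (Fin n) → ℝ} (hf : Continuous f)
    {x : EuclideanSpace ℝ (Fin n)} {r : ℝ} {y : EuclideanSpace ℝ (Fin n)}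
    (hy : y ∈ eCube x r) : f y ≤ ⨆ y ∈ eCube x r, f y := by
  have := le_ciSup (bddAbove_cubeSup hf x r) y
  rwa [ciSup_pos hy] at this

lemma cubeSup_nonneg {f : EuclideanSpace ℝ (Fin n) → ℝ} (hf : Continuous f)
    (hnn : ∀ y, 0 ≤ f y) (x : EuclideanSpace ℝ (Fin n)) (r : ℝ) :
    0 ≤ ⨆ y ∈ eCube x r, f y := by
  have h := le_ciSup (bddAbove_cubeSup hf x r) (0 : EuclideanSpace ℝ (Fin n))
  refine le_trans ?_ h
  by_cases hy : (0 : EuclideanSpace ℝ (Fin n)) ∈ eCube x r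
  · rw [ciSup_pos hy]; exact hnn 0
  · simp only [hy]; rw [Real.iSup_of_isEmpty]

lemma cubeSup_mono {f : EuclideanSpace ℝ (Fin n) → ℝ} (hf : Continuous f)
    (hnn : ∀ y, 0 ≤ f y) {x x' : EuclideanSpace ℝ (Fin n)} {r r' : ℝ}
    (hsub : eCube x r ⊆ eCube x' r') :
    (⨆ y ∈ eCube x r, f y) ≤ ⨆ y ∈ eCube x' r', f y :=
  cubeSup_le (fun _ hy => le_cubeSup hf (hsub hy)) (cubeSup_nonneg hf hnn x' r')

lemma cubeSup_tri {F G H : EuclideanSpace ℝ (Fin n) → ℝ} (hF : Continuous F)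
    (hG : Continuous G) (hH : Continuous H) (x : EuclideanSpace ℝ (Fin n)) (r : ℝ) :
    (⨆ y ∈ eCube x r, |F y - H y|) ≤
      (⨆ y ∈ eCube x r, |F y - G y|) + ⨆ y ∈ eCube x r, |G y - H y| := by
  have c1 : Continuous fun y => |F y - G y| := (hF.sub hG).abs
  have c2 : Continuous fun y => |G y - H y| := (hG.sub hH).abs
  refine cubeSup_le (fun y hy => ?_)
    (add_nonneg (cubeSup_nonneg c1 (fun y => abs_nonneg _) x r)
      (cubeSup_nonneg c2 (fun y => abs_nonneg _) x r))
  calc |F y - H y| ≤ |F y - G y| + |G y - H y| := abs_sub_le _ _ _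
    _ ≤ _ := add_le_add (le_cubeSup c1 hy) (le_cubeSup c2 hy)

lemma cubeSup_comm (F G : EuclideanSpace ℝ (Fin n) → ℝ) (x : EuclideanSpace ℝ (Fin n)) (r : ℝ) :
    (⨆ y ∈ eCube x r, |F y - G y|) = ⨆ y ∈ eCube x r, |G y - F y| :=
  iSup_congr fun y => iSup_congr fun _ => abs_sub_comm _ _

lemma contEval (p : MvPolynomial (Fin n) ℝ) :
    Continuous fun y : EuclideanSpace ℝ (Fin n) => eval (fun j => y j) p :=
  (MvPolynomial.continuous_eval p).comp
    (PiLp.continuousLinearEquiv 2 ℝ (fun _ : Fin n => ℝ)).continuous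

lemma eCube_subset_add {x x' : EuclideanSpace ℝ (Fin n)} {d : ℝ}
    (hd : ∀ i, |x i - x' i| ≤ d) (t : ℝ) : eCube x t ⊆ eCube x' (t + d) := fun y hy i =>
  (abs_sub_le (y i) (x i) (x' i)).trans (add_le_add (hy i) (hd i))

lemma center_dist {x x' : EuclideanSpace ℝ (Fin n)} {r r' : ℝ} (hr : 0 ≤ r)
    (hsub : eCube x r ⊆ eCube x' r') (i : Fin n) : |x i - x' i| ≤ r' - r := by
  have hmem : ∀ s : ℝ, |s| ≤ r →
      (WithLp.toLp 2 (fun j => if j = i then x i + s else x j) :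
        EuclideanSpace ℝ (Fin n)) ∈ eCube x r := by
    intro s hs j
    show |(if j = i then x i + s else x j) - x j| ≤ r
    by_cases hj : j = i
    · subst hj
      rw [if_pos rfl]
      simpa using hs
    · rw [if_neg hj]
      simpa using hr
  have h1 := hsub (hmem r (le_of_eq (abs_of_nonneg hr))) i
  have h2 := hsub (hmem (-r) (by rw [abs_neg]; exact le_of_eq (abs_of_nonneg hr))) i
  have h1' : |x i + r - x' i| ≤ r' := by simpa using h1
  have h2' : |x i + -r - x' i| ≤ r' := by simpa using h2
  rw [abs_le] at h1' h2' ⊢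
  constructor <;> [linarith [h2'.1, h2'.2]; linarith [h1'.1, h1'.2]]

lemma dyadic_pair {s s' : ℝ} (hs : 0 < s) (h2 : s' ≤ 2*s) :
    ∃ i : ℤ, (2:ℝ)^i ≤ s ∧ s' ≤ (2:ℝ)^(i+2) := by
  refine ⟨Int.log 2 s, ?_, ?_⟩
  · have := Int.zpow_log_le_self (R := ℝ) (b := 2) one_lt_two hs
    norm_num at this
    exact this
  · have h3 : s < (2:ℝ)^(Int.log 2 s + 1) := by
      have := Int.lt_zpow_succ_log_self (R := ℝ) (b := 2) one_lt_two s
      norm_num at this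
      exact this
    have h4 : (2:ℝ)^(Int.log 2 s + 2) = (2:ℝ)^(Int.log 2 s + 1) * 2 := by
      rw [← zpow_add_one₀ (two_ne_zero)]; ring_nf
    linarith

variable {k : ℕ} {ω : ℝ → ℝ} {Cω : ℝ}

lemma step_int (hmono : MonotoneOn ω (Ioi 0))
    (hint : ∀ t : ℝ, 0 < t → IntervalIntegrable (fun u => ω u / u) volume 0 t ∧
      (∫ u in (0:ℝ)..t, ω u / u) ≤ Cω * ω t)
    {a : ℝ} (ha : 0 < a) :
    ω a * Real.log 2 ≤ ∫ u in a..2*a, ω u / u := by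
  have h2a : 0 < 2*a := by linarith
  have hii : IntervalIntegrable (fun u => ω u / u) volume a (2*a) := by
    refine (hint (2*a) h2a).1.mono_set ?_
    rw [uIcc_of_le (by linarith : a ≤ 2*a), uIcc_of_le (le_of_lt h2a)]
    exact Icc_subset_Icc (le_of_lt ha) le_rfl
  have hconst : IntervalIntegrable (fun u => ω a / u) volume a (2*a) := by
    apply ContinuousOn.intervalIntegrable
    apply continuousOn_const.div continuousOn_id
    intro u hu
    rw [uIcc_of_le (by linarith : a ≤ 2*a)] at hu
    exact ne_of_gt (lt_of_lt_of_le ha hu.1)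
  have heq : (∫ u in a..2*a, ω a / u) = ω a * Real.log 2 := by
    simp_rw [div_eq_mul_inv, intervalIntegral.integral_const_mul]
    congr 1
    rw [show (fun u : ℝ => u⁻¹) = fun u : ℝ => 1/u by funext u; rw [one_div]]
    rw [integral_one_div]
    · congr 1; field_simp
    · rw [uIcc_of_le (by linarith : a ≤ 2*a)]
      intro h0; exact absurd h0.1 (by linarith)
  rw [← heq]
  refine intervalIntegral.integral_mono_on (by linarith) hconst hii (fun u hu => ?_)
  have hu0 : 0 < u := lt_of_lt_of_le ha hu.1
  gcongr
  exact hmono (mem_Ioi.mpr ha) (mem_Ioi.mpr hu0) hu.1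

lemma sum_int (hpos : ∀ t : ℝ, 0 < t → 0 < ω t) (hmono : MonotoneOn ω (Ioi 0))
    (hint : ∀ t : ℝ, 0 < t → IntervalIntegrable (fun u => ω u / u) volume 0 t ∧
      (∫ u in (0:ℝ)..t, ω u / u) ≤ Cω * ω t)
    (j : ℕ) {r : ℝ} (hr : 0 < r) :
    (∑ i ∈ Finset.range j, ω (2^(i+1) * r)) * Real.log 2 ≤
      ∫ u in (0:ℝ)..(2^(j+1) * r), ω u / u := by
  have hnn : ∀ T : ℝ, 0 ≤ T → (0:ℝ) ≤ ∫ u in (0:ℝ)..T, ω u / u := by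
    intro T hT
    refine intervalIntegral.integral_nonneg hT (fun u hu => ?_)
    rcases eq_or_lt_of_le hu.1 with h | h
    · rw [← h]; simp
    · exact le_of_lt (div_pos (hpos u h) h)
  induction j with
  | zero =>
    simp only [Finset.range_zero, Finset.sum_empty, zero_mul]
    exact hnn (2^(0+1) * r) (by positivity)
  | succ j ih =>
    rw [Finset.sum_range_succ, add_mul]
    have hpa : (0:ℝ) < 2^(j+1) * r := by positivity
    have key := step_int hmono hint hpa
    have int1 : IntervalIntegrable (fun u => ω u / u) volume 0 (2^(j+1) * r) := (hint _ hpa).1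
    have int2 : IntervalIntegrable (fun u => ω u / u) volume (2^(j+1) * r) (2^(j+1+1) * r) := by
      refine (hint (2^(j+1+1) * r) (by positivity)).1.mono_set ?_
      rw [uIcc_of_le, uIcc_of_le]
      · refine Icc_subset_Icc (by positivity) le_rfl
      · positivity
      · have : (2:ℝ)^(j+1) ≤ 2^(j+1+1) := by
          apply pow_le_pow_right₀ one_le_two; omega
        nlinarith
    have adj := intervalIntegral.integral_add_adjacent_intervals int1 int2
    have h2 : 2 * (2^(j+1) * r) = 2^(j+1+1) * r := by ring
    calc (∑ i ∈ Finset.range j, ω (2^(i+1) * r)) * Real.log 2 + ω (2^(j+1) * r) * Real.log 2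
        ≤ (∫ u in (0:ℝ)..(2^(j+1) * r), ω u / u)
            + ∫ u in (2^(j+1)*r)..(2*(2^(j+1)*r)), ω u / u := add_le_add ih key
      _ = (∫ u in (0:ℝ)..(2^(j+1) * r), ω u / u)
            + ∫ u in (2^(j+1)*r)..(2^(j+1+1)*r), ω u / u := by rw [h2]
      _ = ∫ u in (0:ℝ)..(2^(j+1+1) * r), ω u / u := adj

lemma omega_scale (hanti : AntitoneOn (fun t : ℝ => ω t / t ^ k) (Ioi 0)) {t : ℝ} (ht : 0 < t) :
    ω (4*t) ≤ 4^k * ω t := by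
  have h1 := hanti (mem_Ioi.mpr ht) (mem_Ioi.mpr (by linarith : (0:ℝ) < 4*t)) (by linarith)
  simp only at h1
  rw [div_le_div_iff₀ (by positivity) (by positivity)] at h1
  have h2 : ((4:ℝ)*t)^k = 4^k * t^k := mul_pow 4 t k
  have htk : (0:ℝ) < t^k := by positivity
  rw [h2] at h1
  have h3 : ω (4*t) * t^k ≤ (4^k * ω t) * t^k := by nlinarith [h1]
  exact le_of_mul_le_mul_right h3 htk

end Aux

/-- A chain condition satisfied for dyadically comparable pairs of cubes propagates,
up to a constant depending only on `k` and `Cω`, to all pairs of cubes. -/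
theorem stmt13 (k : ℕ) (hk : 1 ≤ k) (Cω : ℝ) :
    ∃ c : ℝ, 0 < c ∧
      ∀ ω : ℝ → ℝ, IsQuasipowerMajorant k ω Cω →
      ∀ (n : ℕ) (X : Set (EuclideanSpace ℝ (Fin n))),
        IsClosed X → ¬Bornology.IsBounded X →
        ∀ P : EuclideanSpace ℝ (Fin n) → ℝ → MvPolynomial (Fin n) ℝ,
          (∀ (x : EuclideanSpace ℝ (Fin n)) (r : ℝ), (P x r).totalDegree ≤ k - 1) →
          ∀ C : ℝ, 0 ≤ C →
            (∀ x ∈ X, ∀ x' ∈ X, ∀ r r' : ℝ, 0 < r → r < r' →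
              eCube x r ⊆ eCube x' r' →
              (∃ i : ℤ, (2 : ℝ) ^ i ≤ r ∧ r' ≤ (2 : ℝ) ^ (i + 2)) →
              (⨆ y ∈ eCube x r,
                  |eval (fun j => y j) (P x r) - eval (fun j => y j) (P x' r')|) ≤
                C * ω r') →
            ∀ x ∈ X, ∀ x' ∈ X, ∀ r r' : ℝ, 0 < r → r < r' →
              eCube x r ⊆ eCube x' r' →
              (⨆ y ∈ eCube x r,
                  |eval (fun j => y j) (P x r) - eval (fun j => y j) (P x' r')|) ≤
                c * C * ω r' := by
  have hlog : 0 < Real.log 2 := Real.log_pos one_lt_two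
  have hM : (0:ℝ) < max Cω 1 := lt_of_lt_of_le one_pos (le_max_right _ _)
  refine ⟨4^k * (max Cω 1 / Real.log 2 + 3), by positivity, ?_⟩
  intro ω hω n X hX hXub P hdeg C hC H x hx x' hx' r r' hr hrr' hsub
  obtain ⟨hpos, hmono, htend, hanti, hint⟩ := hω
  have hr' : 0 < r' := hr.trans hrr'
  have hωnn : ∀ t : ℝ, 0 < t → 0 ≤ ω t := fun t ht => (hpos t ht).le
  have contD : ∀ p q : MvPolynomial (Fin n) ℝ,
      Continuous fun y : EuclideanSpace ℝ (Fin n) =>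
        |eval (fun j => y j) p - eval (fun j => y j) q| :=
    fun p q => ((contEval p).sub (contEval q)).abs
  have hc1 : (1:ℝ) ≤ 4^k * (max Cω 1 / Real.log 2 + 3) := by
    have h4 : (1:ℝ) ≤ 4^k := one_le_pow₀ (by norm_num)
    nlinarith [div_nonneg hM.le hlog.le]
  by_cases hcase : r' ≤ 2*r
  · have hd := H x hx x' hx' r r' hr hrr' hsub (dyadic_pair hr hcase)
    refine hd.trans ?_
    nlinarith [mul_nonneg hC (hωnn r' hr'), hc1]
  · push_neg at hcase
    -- the dyadic exponent
    have hq : (2:ℝ) < r'/r := by rw [lt_div_iff₀ hr]; linarith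
    have hL0 : (0:ℤ) ≤ Int.log 2 (r'/r) := by
      rw [← Int.zpow_le_iff_le_log one_lt_two (div_pos hr' hr)]
      norm_num
      linarith
    set j : ℕ := (Int.log 2 (r'/r)).toNat with hj_def
    have hjL : (j:ℤ) = Int.log 2 (r'/r) := Int.toNat_of_nonneg hL0
    have h2L : (2:ℝ)^j ≤ r'/r := by
      have := Int.zpow_log_le_self (R := ℝ) (b := 2) one_lt_two (div_pos hr' hr)
      norm_num at this
      rw [← hjL, zpow_natCast] at this
      exact this
    have hup : r'/r < (2:ℝ)^(j+1) := by
      have := Int.lt_zpow_succ_log_self (R := ℝ) (b := 2) one_lt_two (r'/r)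
      norm_num at this
      rw [← hjL] at this
      have hcast : ((j:ℤ)+1) = ((j+1 : ℕ) : ℤ) := by push_cast; ring
      rw [hcast, zpow_natCast] at this
      exact this
    set t : ℝ := 2^(j+1) * r with ht_def
    have htpos : 0 < t := by positivity
    have ht_lb : r' < t := by
      rw [div_lt_iff₀ hr] at hup
      simpa [ht_def] using hup
    have ht_ub : t ≤ 2*r' := by
      rw [le_div_iff₀ hr] at h2L
      have : (2:ℝ)^(j+1) * r = 2 * ((2:ℝ)^j * r) := by ring
      rw [ht_def, this]
      nlinarith [h2L]
    set u : ℝ := t + (r' - r) with hu_def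
    have hupos : 0 < u := by rw [hu_def]; linarith
    have hu_gt : r' < u := by rw [hu_def]; linarith
    have ht_lt_u : t < u := by rw [hu_def]; linarith
    have hu_lt2t : u < 2*t := by rw [hu_def]; linarith
    have hu_le4 : u ≤ 4*r' := by linarith
    set v : ℝ := Real.sqrt (u * r') with hv_def
    have hurpos : 0 < u * r' := mul_pos hupos hr'
    have hv_pos : 0 < v := Real.sqrt_pos.mpr hurpos
    have hv_gt : r' < v := by
      have h1 : Real.sqrt (r' * r') < Real.sqrt (u * r') :=
        Real.sqrt_lt_sqrt (by positivity) (by nlinarith)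
      rwa [Real.sqrt_mul_self hr'.le] at h1
    have hv_lt_u : v < u := by
      have h1 : Real.sqrt (u * r') < Real.sqrt (u * u) :=
        Real.sqrt_lt_sqrt (by positivity) (by nlinarith)
      rwa [Real.sqrt_mul_self hupos.le] at h1
    have hv_le : v ≤ 2*r' := by
      have h1 : Real.sqrt (u * r') ≤ Real.sqrt ((2*r') * (2*r')) :=
        Real.sqrt_le_sqrt (by nlinarith)
      rwa [Real.sqrt_mul_self (by linarith : (0:ℝ) ≤ 2*r')] at h1
    have hu_le_2v : u ≤ 2*v := by
      have h1 : Real.sqrt (u * u) ≤ Real.sqrt (4 * (u * r')) :=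
        Real.sqrt_le_sqrt (by nlinarith)
      rw [Real.sqrt_mul_self hupos.le] at h1
      have h2 : Real.sqrt (4 * (u * r')) = 2 * Real.sqrt (u * r') := by
        rw [show (4 : ℝ) * (u * r') = 2^2 * (u * r') by norm_num,
          Real.sqrt_mul (by positivity), Real.sqrt_sq (by norm_num : (0:ℝ) ≤ 2)]
      rw [h2] at h1
      exact h1
    -- inclusions of cubes
    have hsubr : ∀ m : ℕ, eCube x r ⊆ eCube x (2^m * r) := by
      intro m
      refine eCube_mono ?_
      have : (1:ℝ) ≤ 2^m := one_le_pow₀ one_le_two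
      nlinarith
    have hcross : eCube x t ⊆ eCube x' u := by
      have h1 := eCube_subset_add (fun i => center_dist hr.le hsub i) t
      rwa [hu_def]
    -- the dyadic chain with fixed center x
    have chain : ∀ m : ℕ,
        (⨆ y ∈ eCube x r,
          |eval (fun j => y j) (P x r) - eval (fun j => y j) (P x (2^m * r))|) ≤
          C * ∑ i ∈ Finset.range m, ω (2^(i+1) * r) := by
      intro m
      induction m with
      | zero =>
        simp only [pow_zero, one_mul, Finset.range_zero, Finset.sum_empty, mul_zero]
        exact cubeSup_le (fun y hy => by simp) le_rfl
      | succ m ih =>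
        have hmr : 0 < 2^m * r := by positivity
        have heq2 : (2:ℝ)^(m+1) * r = 2 * (2^m * r) := by ring
        have hlt : 2^m * r < 2^(m+1) * r := by rw [heq2]; linarith
        have hstep := H x hx x hx (2^m * r) (2^(m+1) * r) hmr hlt
          (eCube_mono hlt.le) (dyadic_pair hmr (le_of_eq heq2))
        calc (⨆ y ∈ eCube x r,
              |eval (fun j => y j) (P x r) - eval (fun j => y j) (P x (2^(m+1) * r))|)
            ≤ (⨆ y ∈ eCube x r,
                |eval (fun j => y j) (P x r) - eval (fun j => y j) (P x (2^m * r))|)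
              + ⨆ y ∈ eCube x r,
                  |eval (fun j => y j) (P x (2^m * r)) -
                    eval (fun j => y j) (P x (2^(m+1) * r))| :=
              cubeSup_tri (contEval _) (contEval _) (contEval _) x r
          _ ≤ C * (∑ i ∈ Finset.range m, ω (2^(i+1) * r)) + C * ω (2^(m+1) * r) := by
              refine add_le_add ih ?_
              exact (cubeSup_mono (contD _ _) (fun y => abs_nonneg _) (hsubr m)).trans hstep
          _ = C * ∑ i ∈ Finset.range (m+1), ω (2^(i+1) * r) := by
              rw [Finset.sum_range_succ]; ring
    -- bound the sum by the integral
    have h2t : (2:ℝ)^(j+1+1) * r = 2*t := by rw [ht_def]; ring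
    have h2tpos : (0:ℝ) < 2*t := by linarith
    have hsum : (∑ i ∈ Finset.range (j+1), ω (2^(i+1) * r)) ≤
        max Cω 1 * (4^k * ω r') / Real.log 2 := by
      have s0 := sum_int hpos hmono hint (j+1) hr
      rw [h2t] at s0
      have s1 := (hint (2*t) h2tpos).2
      have e1 : ω (2*t) ≤ ω (4*r') :=
        hmono (mem_Ioi.mpr h2tpos) (mem_Ioi.mpr (by linarith)) (by linarith)
      have e2 : ω (4*r') ≤ 4^k * ω r' := omega_scale hanti hr'
      have e3 : 0 < ω (2*t) := hpos _ h2tpos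
      have s2 : Cω * ω (2*t) ≤ max Cω 1 * (4^k * ω r') := by
        calc Cω * ω (2*t) ≤ max Cω 1 * ω (2*t) :=
              mul_le_mul_of_nonneg_right (le_max_left _ _) e3.le
          _ ≤ max Cω 1 * (4^k * ω r') :=
              mul_le_mul_of_nonneg_left (e1.trans e2) hM.le
      rw [le_div_iff₀ hlog]
      exact (s0.trans s1).trans s2
    -- the four pieces
    have l1 : (⨆ y ∈ eCube x r,
        |eval (fun j => y j) (P x r) - eval (fun j => y j) (P x t)|) ≤
        C * (max Cω 1 * (4^k * ω r') / Real.log 2) := by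
      refine (chain (j+1)).trans ?_
      exact mul_le_mul_of_nonneg_left hsum hC
    have hωu : ω u ≤ 4^k * ω r' := by
      have e1 : ω u ≤ ω (4*r') :=
        hmono (mem_Ioi.mpr hupos) (mem_Ioi.mpr (by linarith)) (by linarith)
      exact e1.trans (omega_scale hanti hr')
    have hωv : ω v ≤ 4^k * ω r' := by
      have e1 : ω v ≤ ω (4*r') :=
        hmono (mem_Ioi.mpr hv_pos) (mem_Ioi.mpr (by linarith)) (by linarith)
      exact e1.trans (omega_scale hanti hr')
    have l2 : (⨆ y ∈ eCube x r,
        |eval (fun j => y j) (P x t) - eval (fun j => y j) (P x' u)|) ≤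
        C * (4^k * ω r') := by
      have hstep := H x hx x' hx' t u htpos ht_lt_u hcross (dyadic_pair htpos hu_lt2t.le)
      have hsubxt : eCube x r ⊆ eCube x t := by rw [ht_def]; exact hsubr (j+1)
      refine ((cubeSup_mono (contD _ _) (fun y => abs_nonneg _) hsubxt).trans hstep).trans ?_
      exact mul_le_mul_of_nonneg_left hωu hC
    have l3 : (⨆ y ∈ eCube x r,
        |eval (fun j => y j) (P x' u) - eval (fun j => y j) (P x' v)|) ≤
        C * (4^k * ω r') := by
      have hstep := H x' hx' x' hx' v u hv_pos hv_lt_u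
        (eCube_mono hv_lt_u.le) (dyadic_pair hv_pos hu_le_2v)
      have hsubxv : eCube x r ⊆ eCube x' v := hsub.trans (eCube_mono hv_gt.le)
      rw [cubeSup_comm]
      refine ((cubeSup_mono (contD _ _) (fun y => abs_nonneg _) hsubxv).trans hstep).trans ?_
      exact mul_le_mul_of_nonneg_left hωu hC
    have l4 : (⨆ y ∈ eCube x r,
        |eval (fun j => y j) (P x' v) - eval (fun j => y j) (P x' r')|) ≤
        C * (4^k * ω r') := by
      have hstep := H x' hx' x' hx' r' v hr' hv_gt (eCube_mono hv_gt.le)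
        (dyadic_pair hr' hv_le)
      rw [cubeSup_comm]
      refine ((cubeSup_mono (contD _ _) (fun y => abs_nonneg _) hsub).trans hstep).trans ?_
      exact mul_le_mul_of_nonneg_left hωv hC
    -- assemble with the triangle inequality
    have tri : (⨆ y ∈ eCube x r,
        |eval (fun j => y j) (P x r) - eval (fun j => y j) (P x' r')|) ≤
        (⨆ y ∈ eCube x r,
          |eval (fun j => y j) (P x r) - eval (fun j => y j) (P x t)|)
        + ((⨆ y ∈ eCube x r,
            |eval (fun j => y j) (P x t) - eval (fun j => y j) (P x' u)|)
          + ((⨆ y ∈ eCube x r,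
              |eval (fun j => y j) (P x' u) - eval (fun j => y j) (P x' v)|)
            + ⨆ y ∈ eCube x r,
                |eval (fun j => y j) (P x' v) - eval (fun j => y j) (P x' r')|)) := by
      refine (cubeSup_tri (contEval (P x r)) (contEval (P x t))
        (contEval (P x' r')) x r).trans ?_
      refine add_le_add le_rfl ?_
      refine (cubeSup_tri (contEval (P x t)) (contEval (P x' u))
        (contEval (P x' r')) x r).trans ?_
      refine add_le_add le_rfl ?_
      exact cubeSup_tri (contEval (P x' u)) (contEval (P x' v))
        (contEval (P x' r')) x r
    have hfinal : 4^k * (max Cω 1 / Real.log 2 + 3) * C * ω r' =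
        C * (max Cω 1 * (4^k * ω r') / Real.log 2)
          + (C * (4^k * ω r') + (C * (4^k * ω r') + C * (4^k * ω r'))) := by
      field_simp
      ring
    linarith [tri, l1, l2, l3, l4]
end
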